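/- Let m be a positive integer and Θ a real 1×m matrix. Then α(ᵗΘ) ≥ (α_×(Θ) − m) / ((m−1)·α_×(Θ) + m), where if α_×(Θ) = +∞ the right-hand side is interpreted as 1/(m−1) when m ≥ 2 and as +∞ when m = 1. -/

import Mathlib

open MeasureTheory Filter Matrix

noncomputable section

/-- Geometric mean of the absolute values of the coordinates: Π(z). -/
def Pigeo {k : ℕ} (z : Fin k → ℝ) : ℝ := (∏ i, |z i|) ^ ((1:ℝ)/k)

/-- Geometric mean of `max 1 |z i|`: Π'(z). -/
def Pigeo' {k : ℕ} (z : Fin k → ℝ) : ℝ := (∏ i, max 1 |z i|) ^ ((1:ℝ)/k)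

/-- Coordinatewise cast of an integer vector to a real vector. -/
def ivec {k : ℕ} (x : Fin k → ℤ) : Fin k → ℝ := fun i => (x i : ℝ)

/-- The constant Δ_d = (2^{d-1}√d)⁻¹ · vol_{d-1}{x ∈ [-1,1]^d : x₁+⋯+x_d = 0}. -/
def Delta (d : ℕ) : ℝ :=
  ((2:ℝ) ^ (d - 1) * Real.sqrt d)⁻¹ *
    (μH[(d:ℝ) - 1] {x : EuclideanSpace ℝ (Fin d) | (∀ i, |x i| ≤ 1) ∧ ∑ i, x i = 0}).toReal

/-- For every sufficiently large t there are x ∈ ℤ^m \ {0}, y ∈ ℤ^n with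
Π'(x) ≤ t and Π(Θx − y) ≤ t^{−γ}. -/
def UnifMultApprox (n m : ℕ) (Θ : Matrix (Fin n) (Fin m) ℝ) (γ : ℝ) : Prop :=
  ∀ᶠ t : ℝ in Filter.atTop, ∃ x : Fin m → ℤ, ∃ y : Fin n → ℤ, x ≠ 0 ∧
    Pigeo' (ivec x) ≤ t ∧ Pigeo (Θ.mulVec (ivec x) - ivec y) ≤ t ^ (-γ)

/-- The uniform multiplicative Diophantine exponent α_×(Θ), as an extended real. -/
def malpha (n m : ℕ) (Θ : Matrix (Fin n) (Fin m) ℝ) : EReal :=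
  sSup {x : EReal | ∃ γ : ℝ, x = (γ : EReal) ∧ UnifMultApprox n m Θ γ}

/-- For every sufficiently large t there are x ∈ ℤ^m \ {0}, y ∈ ℤ^n with
|x|_∞ ≤ t and |Θx − y|_∞ ≤ t^{−γ}. -/
def UnifOrdApprox (n m : ℕ) (Θ : Matrix (Fin n) (Fin m) ℝ) (γ : ℝ) : Prop :=
  ∀ᶠ t : ℝ in Filter.atTop, ∃ x : Fin m → ℤ, ∃ y : Fin n → ℤ, x ≠ 0 ∧
    ‖ivec x‖ ≤ t ∧ ‖Θ.mulVec (ivec x) - ivec y‖ ≤ t ^ (-γ)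

/-- The uniform (ordinary) Diophantine exponent α(Θ), as an extended real. -/
def oalpha (n m : ℕ) (Θ : Matrix (Fin n) (Fin m) ℝ) : EReal :=
  sSup {x : EReal | ∃ γ : ℝ, x = (γ : EReal) ∧ UnifOrdApprox n m Θ γ}

/-!
Fix a large `s` and use the hypothesis at the scale `t = s^τ`: there are `x ≠ 0` and `y` with
`∏ max 1 |xᵢ| ≤ t^m` and `|θ·x - y| ≤ t^{-γ}`; pick `i₀` with `x i₀ ≠ 0`. Minkowski's linear
forms theorem, applied to `q`, the forms `θⱼ q - pⱼ` (`j ≠ i₀`) and the integer-valued form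
`x·p - y q` in boxes of sides `s`, `D / max 1 |xⱼ|` and `1/2`, gives `(q, p) ≠ 0` with
`x·p = y q` as soon as `τ m < 1 - (m - 1) β`, where `D ≈ s^{-β}`; `q ≠ 0` because for `q = 0`
the small forms force `p = 0`. Since `∑ⱼ xⱼ (θⱼ q - pⱼ) = (θ·x - y) q`, the remaining form
`θ_{i₀} q - p_{i₀}` is at most `s t^{-γ} + m D`, which is `≤ s^{-β}` once `τ γ > 1 + β`. Such a
`τ` exists exactly when `m (1 + β) < γ (1 - (m - 1) β)`, i.e. `β < (γ - m) / ((m - 1) γ + m)`.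
-/

open Finset

theorem exists_ne_zero_abs_mulVec_le {ι : Type*} [Fintype ι] [DecidableEq ι]
    (M : Matrix ι ι ℝ) (hM : M.det ≠ 0) {c : ι → ℝ} (hc : ∀ i, 0 ≤ c i)
    (hvol : |M.det| < ∏ i, c i) :
    ∃ z : ι → ℤ, z ≠ 0 ∧ ∀ i, |(M *ᵥ fun j => (z j : ℝ)) i| ≤ c i := by
  let b := Pi.basisFun ℝ ι
  let L := Submodule.span ℤ (Set.range b)
  let K : Set (ι → ℝ) := Matrix.toLin' M ⁻¹' Set.Icc (-c) c
  have hsymm : ∀ v ∈ K, -v ∈ K := fun v hv => by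
    simp only [K, Set.mem_preimage, Matrix.toLin'_apply, Set.mem_Icc, Matrix.mulVec_neg] at hv ⊢
    exact ⟨neg_le_neg hv.2, neg_le.mp hv.1⟩
  have hvolK : volume K = ENNReal.ofReal (|M.det|⁻¹ * ∏ i, (2 * c i)) := by
    have hM' : LinearMap.det (Matrix.toLin' M) ≠ 0 := by rwa [LinearMap.det_toLin']
    rw [Measure.addHaar_preimage_linearMap _ hM', LinearMap.det_toLin', Real.volume_Icc_pi,
      ← ENNReal.ofReal_prod_of_nonneg fun i _ => by simp only [Pi.neg_apply]; linarith [hc i],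
      abs_inv, ← ENNReal.ofReal_mul (by positivity)]
    simp only [Pi.neg_apply, sub_neg_eq_add, two_mul]
  have hpos : 0 < ∏ i, c i := (abs_nonneg _).trans_lt hvol
  have hlt : volume (ZSpan.fundamentalDomain b) * 2 ^ Module.finrank ℝ (ι → ℝ) < volume K := by
    rw [ZSpan.fundamentalDomain_pi_basisFun, volume_pi_pi, Module.finrank_fintype_fun_eq_card]
    simp only [Real.volume_Ico, sub_zero, ENNReal.ofReal_one, prod_const_one, one_mul]
    rw [hvolK, prod_mul_distrib, prod_const, card_univ, mul_left_comm, inv_mul_eq_div,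
      ← ENNReal.ofReal_ofNat, ← ENNReal.ofReal_pow zero_le_two,
      ENNReal.ofReal_lt_ofReal_iff (mul_pos (by positivity) (div_pos hpos (abs_pos.mpr hM))),
      lt_mul_iff_one_lt_right (by positivity),
      one_lt_div (abs_pos.mpr hM)]
    exact hvol
  have : Countable L.toAddSubgroup := inferInstanceAs (Countable L)
  obtain ⟨ξ, hξ0, hξK⟩ := exists_ne_zero_mem_lattice_of_measure_mul_two_pow_lt_measure
    (ZSpan.isAddFundamentalDomain' b volume) hsymm ((convex_Icc (-c) c).linear_preimage _) hlt
  choose z hz using fun i => (b.mem_span_iff_repr_mem ℤ ξ).mp ξ.2 i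
  have hzξ : (fun j => (z j : ℝ)) = ξ := funext hz
  refine ⟨z, fun h => hξ0 (Subtype.ext ?_), fun i => abs_le.mpr ?_⟩
  · rw [← hzξ, h]
    ext
    simp
  · rw [hzξ]
    exact ⟨hξK.1 i, hξK.2 i⟩

theorem det_updateRow_one {ι : Type*} [Fintype ι] [DecidableEq ι] (x : ι → ℝ) (i₀ : ι) :
    (updateRow (1 : Matrix ι ι ℝ) i₀ x).det = x i₀ := by
  convert det_updateRow_sum (1 : Matrix ι ι ℝ) i₀ x using 3
  · exact pi_eq_sum_univ x
  · simp

section LinearFormsMatrix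

variable {ι : Type*} [Fintype ι] [DecidableEq ι]

def linearFormsMatrix (θ x : ι → ℝ) (y : ℝ) (i₀ : ι) : Matrix (Unit ⊕ ι) (Unit ⊕ ι) ℝ :=
  fromBlocks 1 0 (replicateCol Unit (-Function.update θ i₀ y)) (updateRow 1 i₀ x)

theorem det_linearFormsMatrix (θ x : ι → ℝ) (y : ℝ) (i₀ : ι) :
    (linearFormsMatrix θ x y i₀).det = x i₀ := by
  rw [linearFormsMatrix, det_fromBlocks_zero₁₂, det_one, one_mul, det_updateRow_one]

theorem linearFormsMatrix_mulVec (θ x : ι → ℝ) (y : ℝ) (i₀ : ι) (v : Unit ⊕ ι → ℝ) :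
    linearFormsMatrix θ x y i₀ *ᵥ v = Sum.elim (fun _ => v (.inl ()))
      (Function.update (fun j => v (.inr j) - θ j * v (.inl ())) i₀
        (∑ k, x k * v (.inr k) - y * v (.inl ()))) := by
  rw [linearFormsMatrix, fromBlocks_mulVec]
  congr 1
  · ext
    simp
  · ext j
    rcases eq_or_ne j i₀ with rfl | hj
    · simp [updateRow_mulVec, mulVec, dotProduct]
      ring
    · simp [updateRow_mulVec, hj, mulVec, dotProduct]
      ring

theorem exists_dotProduct_eq_abs_sub_le (θ : ι → ℝ) (x : ι → ℤ) (y : ℤ) {i₀ : ι}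
    (hx : x i₀ ≠ 0) {s : ℝ} (hs : 0 ≤ s) {δ : ι → ℝ} (hδ : ∀ j, 0 ≤ δ j)
    (hvol : 2 * |(x i₀ : ℝ)| < s * ∏ j ∈ {i₀}ᶜ, δ j) :
    ∃ q : ℤ, ∃ p : ι → ℤ, (q ≠ 0 ∨ p ≠ 0) ∧ |(q : ℝ)| ≤ s ∧
      (∀ j ≠ i₀, |θ j * q - p j| ≤ δ j) ∧ x ⬝ᵥ p = y * q := by
  let M := linearFormsMatrix θ (fun k => (x k : ℝ)) y i₀
  let c : Unit ⊕ ι → ℝ := Sum.elim (fun _ => s) (Function.update δ i₀ (1 / 2))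
  have hc : ∀ k, 0 ≤ c k := by
    rintro (_ | j)
    · exact hs
    · rcases eq_or_ne j i₀ with rfl | hj
      · simp only [c, Sum.elim_inr, Function.update_self]
        norm_num
      · simp only [c, Sum.elim_inr, Function.update_of_ne hj, hδ j]
  have hvol' : |M.det| < ∏ k, c k := by
    rw [det_linearFormsMatrix, Fintype.prod_sum_type, Fintype.prod_unique]
    simp only [c, Sum.elim_inl, Sum.elim_inr]
    rw [prod_update_of_mem (mem_univ i₀), ← compl_eq_univ_sdiff]
    linarith
  obtain ⟨z, hz0, hz⟩ := exists_ne_zero_abs_mulVec_le M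
    ((det_linearFormsMatrix ..).trans_ne (Int.cast_ne_zero.mpr hx)) hc hvol'
  simp only [M, linearFormsMatrix_mulVec] at hz
  have hz_inr : ∀ j ≠ i₀, |θ j * z (.inl ()) - z (.inr j)| ≤ δ j := fun j hj => by
    simpa only [c, Sum.elim_inr, Function.update_of_ne hj, abs_sub_comm] using hz (.inr j)
  have hz_i₀ : |((x ⬝ᵥ (z ∘ .inr) - y * z (.inl ()) : ℤ) : ℝ)| < 1 := by
    have := hz (.inr i₀)
    simp only [c, Sum.elim_inr, Function.update_self] at this
    push_cast [dotProduct, Function.comp_apply]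
    linarith
  refine ⟨z (.inl ()), z ∘ .inr, ?_, hz (.inl ()), hz_inr, ?_⟩
  · by_contra! h
    refine hz0 (funext ?_)
    rintro (_ | j)
    · exact h.1
    · exact congrFun h.2 j
  · linarith [Int.abs_lt_one_iff.mp (by exact_mod_cast hz_i₀)]

end LinearFormsMatrix

section LinearForm

variable {ι : Type*} [Fintype ι] {θ : ι → ℝ} {x p : ι → ℤ} {y q : ℤ}

theorem ne_zero_of_dotProduct_eq {i₀ : ι} (hx : x i₀ ≠ 0) (hqp : q ≠ 0 ∨ p ≠ 0)
    (hp : ∀ j ≠ i₀, |θ j * q - p j| < 1) (hxp : x ⬝ᵥ p = y * q) : q ≠ 0 := by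
  rintro rfl
  have hp_ne : ∀ j ≠ i₀, p j = 0 := fun j hj => by
    have : |(p j : ℝ)| < 1 := by simpa using hp j hj
    exact Int.abs_lt_one_iff.mp (by exact_mod_cast this)
  have hpi₀ : p i₀ = 0 := by
    rw [mul_zero, dotProduct, Fintype.sum_eq_single i₀ fun j hj => by rw [hp_ne j hj, mul_zero]]
      at hxp
    exact (mul_eq_zero.mp hxp).resolve_left hx
  refine hqp.resolve_left (not_not.mpr rfl) (funext fun j => ?_)
  rcases eq_or_ne j i₀ with rfl | hj
  · exact hpi₀
  · exact hp_ne j hj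

theorem abs_mul_sub_le_of_dotProduct_eq [DecidableEq ι] (hxp : x ⬝ᵥ p = y * q) (i₀ : ι) :
    |x i₀ * (θ i₀ * q - p i₀)| ≤
      |(∑ i, θ i * x i - y) * q| + ∑ j ∈ {i₀}ᶜ, |x j * (θ j * q - p j)| := by
  have hsum : ∑ j, (x j : ℝ) * (θ j * q - p j) = (∑ i, θ i * x i - y) * q := by
    have : ∑ j, (x j : ℝ) * p j = y * q := by exact_mod_cast hxp
    calc ∑ j, (x j : ℝ) * (θ j * q - p j) = (∑ j, θ j * x j) * q - ∑ j, (x j : ℝ) * p j := by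
          rw [sum_mul, ← sum_sub_distrib]
          exact sum_congr rfl fun j _ => by ring
      _ = (∑ i, θ i * x i - y) * q := by rw [this]; ring
  rw [Fintype.sum_eq_add_sum_compl i₀] at hsum
  rw [eq_sub_of_add_eq hsum]
  exact (abs_sub _ _).trans (add_le_add_right (abs_sum_le_sum_abs _ _) _)

theorem exists_simultaneous_approx_of_linear_form [DecidableEq ι] (θ : ι → ℝ) (hx : x ≠ 0)
    (y : ℤ) {s D : ℝ} (hs : 0 ≤ s) (hD : 0 < D) (hD1 : D < 1)
    (hvol : 2 * ∏ i, max 1 |(x i : ℝ)| < s * D ^ (Fintype.card ι - 1)) :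
    ∃ q : ℤ, q ≠ 0 ∧ |(q : ℝ)| ≤ s ∧ ∃ p : ι → ℤ,
      ∀ i, |θ i * q - p i| ≤ Fintype.card ι * D + s * |∑ i, θ i * x i - y| := by
  obtain ⟨i₀, hi₀⟩ := Function.ne_iff.mp hx
  set X : ι → ℝ := fun j => max 1 |(x j : ℝ)|
  have hX1 : ∀ j, 1 ≤ X j := fun j => le_max_left _ _
  have hX0 : ∀ j, 0 < X j := fun j => one_pos.trans_le (hX1 j)
  have hxi₀ : 1 ≤ |(x i₀ : ℝ)| := by exact_mod_cast Int.one_le_abs hi₀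
  have hvol' : 2 * |(x i₀ : ℝ)| < s * ∏ j ∈ {i₀}ᶜ, D / X j := by
    rw [Fintype.prod_eq_mul_prod_compl i₀, ← mul_assoc] at hvol
    rw [prod_div_distrib, prod_const, card_compl, card_singleton, mul_div_assoc',
      lt_div_iff₀ (prod_pos fun j _ => hX0 j)]
    rwa [max_eq_right hxi₀] at hvol
  obtain ⟨q, p, hqp, hq, hp, hxp⟩ :=
    exists_dotProduct_eq_abs_sub_le θ x y hi₀ hs (fun j => (div_pos hD (hX0 j)).le) hvol'
  have hDX : ∀ j, D / X j ≤ D := fun j => div_le_self hD.le (hX1 j)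
  have hq0 : q ≠ 0 := ne_zero_of_dotProduct_eq hi₀ hqp
    (fun j hj => (hp j hj).trans_lt ((hDX j).trans_lt hD1)) hxp
  have hr : ∀ j ≠ i₀, |(x j : ℝ) * (θ j * q - p j)| ≤ D := fun j hj => by
    rw [abs_mul]
    calc |(x j : ℝ)| * |θ j * q - p j| ≤ X j * (D / X j) :=
          mul_le_mul (le_max_right _ _) (hp j hj) (abs_nonneg _) (hX0 j).le
      _ = D := mul_div_cancel₀ D (hX0 j).ne'
  set ε := ∑ i, θ i * x i - y
  have hcard : (1 : ℝ) ≤ Fintype.card ι := by exact_mod_cast Fintype.card_pos_iff.mpr ⟨i₀⟩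
  refine ⟨q, hq0, hq, p, fun i => ?_⟩
  rcases eq_or_ne i i₀ with rfl | hi
  · calc |θ i * q - p i| ≤ |(x i : ℝ) * (θ i * q - p i)| := by
          rw [abs_mul]; exact le_mul_of_one_le_left (abs_nonneg _) hxi₀
      _ ≤ |ε * q| + ∑ j ∈ {i}ᶜ, |(x j : ℝ) * (θ j * q - p j)| :=
          abs_mul_sub_le_of_dotProduct_eq hxp i
      _ ≤ s * |ε| + #({i}ᶜ : Finset ι) * D := by
          rw [abs_mul, mul_comm s, ← nsmul_eq_mul, ← sum_const]
          exact add_le_add (mul_le_mul_of_nonneg_left hq (abs_nonneg _))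
            (sum_le_sum fun j hj => hr j (by simpa using hj))
      _ ≤ Fintype.card ι * D + s * |ε| := by
          have : (#({i}ᶜ : Finset ι) : ℝ) ≤ Fintype.card ι := by exact_mod_cast card_le_univ _
          nlinarith [abs_nonneg ε]
  · calc |θ i * q - p i| ≤ D := (hp i hi).trans (hDX i)
      _ ≤ Fintype.card ι * D + s * |ε| := by nlinarith [abs_nonneg ε]

end LinearForm

theorem eventually_mul_rpow_lt_rpow (C : ℝ) {a b : ℝ} (hab : a < b) :
    ∀ᶠ s : ℝ in atTop, C * s ^ a < s ^ b := by
  filter_upwards [eventually_gt_atTop 0,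
    (tendsto_rpow_atTop (sub_pos.mpr hab)).eventually_gt_atTop C] with s hs hsC
  rw [← sub_add_cancel b a, Real.rpow_add hs]
  exact mul_lt_mul_of_pos_right hsC (Real.rpow_pos_of_pos hs a)

theorem Pigeo_mulVec_sub_of_fin_one {m : ℕ} (Θ : Matrix (Fin 1) (Fin m) ℝ) (x : Fin m → ℤ)
    (y : Fin 1 → ℤ) : Pigeo (Θ *ᵥ ivec x - ivec y) = |∑ i, Θ 0 i * x i - y 0| := by
  simp [Pigeo, mulVec, dotProduct, ivec]

theorem norm_transpose_mulVec_sub_le {m : ℕ} {Θ : Matrix (Fin 1) (Fin m) ℝ} {q : ℤ}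
    {p : Fin m → ℤ} {r : ℝ} (hr : 0 ≤ r) (h : ∀ i, |Θ 0 i * q - p i| ≤ r) :
    ‖Θᵀ *ᵥ ivec (fun _ => q) - ivec p‖ ≤ r :=
  (pi_norm_le_iff_of_nonneg hr).mpr fun i => by simpa [mulVec, dotProduct, ivec] using h i

theorem mul_rpow_neg_pow_pred {s : ℝ} (hs : 0 < s) (β : ℝ) {m : ℕ} (hm : 0 < m) :
    s * (s ^ (-β)) ^ (m - 1) = s ^ (1 - (m - 1) * β) := by
  rw [show 1 - (m - 1) * β = 1 + -β * ((m - 1 : ℕ) : ℝ) by push_cast [Nat.cast_pred hm]; ring,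
    Real.rpow_add hs, Real.rpow_one, Real.rpow_mul_natCast hs.le]

theorem prod_max_one_abs_le_pow {k : ℕ} (hk : k ≠ 0) {z : Fin k → ℝ} {t : ℝ}
    (h : Pigeo' z ≤ t) : ∏ i, max 1 |z i| ≤ t ^ k := by
  have hP : 0 ≤ ∏ i, max 1 |z i| := prod_nonneg fun i _ => zero_le_one.trans (le_max_left _ _)
  calc ∏ i, max 1 |z i| = Pigeo' z ^ k := by
        rw [Pigeo', ← Real.rpow_mul_natCast hP, one_div, inv_mul_cancel₀ (by exact_mod_cast hk),
          Real.rpow_one]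
    _ ≤ t ^ k := pow_le_pow_left₀ (Real.rpow_nonneg hP _) h k

theorem exists_scale_exponent {m β γ : ℝ} (hm : 0 < m) (hβ : 0 < β) (hγ : 0 < γ)
    (h : m * (1 + β) < γ * (1 - (m - 1) * β)) :
    ∃ τ, 0 < τ ∧ 1 - τ * γ < -β ∧ τ * m < 1 - (m - 1) * β := by
  obtain ⟨τ, hτ₁, hτ₂⟩ : ∃ τ, (1 + β) / γ < τ ∧ τ < (1 - (m - 1) * β) / m :=
    exists_between (by rw [div_lt_div_iff₀ hγ hm]; linarith)
  refine ⟨τ, lt_trans (by positivity) hτ₁, ?_, (lt_div_iff₀ hm).mp hτ₂⟩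
  rw [div_lt_iff₀ hγ] at hτ₁
  linarith

theorem unifOrdApprox_transpose_of_unifMultApprox {m : ℕ} {Θ : Matrix (Fin 1) (Fin m) ℝ}
    {β γ : ℝ} (hβ : 0 < β) (hγ : 0 < γ) (hβγ : m * (1 + β) < γ * (1 - (m - 1) * β))
    (h : UnifMultApprox 1 m Θ γ) : UnifOrdApprox m 1 Θᵀ β := by
  have hm : 0 < m := by
    obtain ⟨_, x, _, hx, -⟩ := h.exists
    exact Nat.pos_of_ne_zero fun hm => hx (by subst hm; exact Subsingleton.elim _ _)
  obtain ⟨τ, hτ, hτγ, hτm⟩ := exists_scale_exponent (by exact_mod_cast hm) hβ hγ hβγ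
  filter_upwards [(tendsto_rpow_atTop hτ).eventually h, eventually_ge_atTop 1,
    eventually_mul_rpow_lt_rpow (2 * (2 * m) ^ (m - 1)) hτm,
    eventually_mul_rpow_lt_rpow 2 hτγ] with s ⟨x, y, hx, hxt, hxy⟩ hs1 hvol herr
  have hs0 : 0 < s := one_pos.trans_le hs1
  set D := s ^ (-β) / (2 * m)
  have hD : 0 < D := by positivity
  have hD1 : D < 1 := by
    have : s ^ (-β) ≤ 1 := Real.rpow_le_one_of_one_le_of_nonpos hs1 (by linarith)
    rw [div_lt_one (by positivity)]
    linarith [show (1 : ℝ) ≤ m by exact_mod_cast hm]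
  have hvol' : 2 * ∏ i, max 1 |(x i : ℝ)| < s * D ^ (Fintype.card (Fin m) - 1) :=
    calc 2 * ∏ i, max 1 |(x i : ℝ)| ≤ 2 * s ^ (τ * m) := by
          rw [Real.rpow_mul_natCast hs0.le]
          gcongr
          exact prod_max_one_abs_le_pow hm.ne' hxt
      _ < s * D ^ (Fintype.card (Fin m) - 1) := by
          rw [Fintype.card_fin, div_pow, mul_div_assoc', mul_rpow_neg_pow_pred hs0 β hm,
            lt_div_iff₀ (by positivity)]
          linarith
  obtain ⟨q, hq0, hq, p, hp⟩ := exists_simultaneous_approx_of_linear_form (Θ 0) hx (y 0) hs0.le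
    hD hD1 hvol'
  have hε : s * |∑ i, Θ 0 i * x i - y 0| ≤ s ^ (1 - τ * γ) := by
    rw [Pigeo_mulVec_sub_of_fin_one, ← Real.rpow_mul hs0.le] at hxy
    rw [show 1 - τ * γ = 1 + τ * -γ by ring, Real.rpow_add hs0, Real.rpow_one]
    exact mul_le_mul_of_nonneg_left hxy hs0.le
  refine ⟨fun _ => q, p, fun h => hq0 (congrFun h 0), ?_, ?_⟩
  · exact (pi_norm_le_iff_of_nonneg hs0.le).mpr fun _ => by simpa [ivec] using hq
  · have hmD : (m : ℝ) * D = s ^ (-β) / 2 := by simp only [D]; field_simp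
    refine norm_transpose_mulVec_sub_le (by positivity) fun i => (hp i).trans ?_
    rw [Fintype.card_fin]
    linarith

section Exponents

variable {n m : ℕ} {Θ : Matrix (Fin n) (Fin m) ℝ}

theorem UnifMultApprox.mono {γ γ' : ℝ} (h : UnifMultApprox n m Θ γ) (hγ : γ' ≤ γ) :
    UnifMultApprox n m Θ γ' := by
  filter_upwards [h, eventually_ge_atTop 1] with t ⟨x, y, hx, hxt, hxy⟩ ht
  exact ⟨x, y, hx, hxt, hxy.trans (Real.rpow_le_rpow_of_exponent_le ht (neg_le_neg hγ))⟩

theorem unifMultApprox_of_coe_lt_malpha {γ : ℝ} (h : (γ : EReal) < malpha n m Θ) :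
    UnifMultApprox n m Θ γ := by
  obtain ⟨_, ⟨γ', rfl, hγ'⟩, hlt⟩ := lt_sSup_iff.mp h
  exact hγ'.mono (EReal.coe_le_coe_iff.mp hlt.le)

theorem exists_abs_mulVec_sub_le_half (Θ : Matrix (Fin n) (Fin m) ℝ) (v : Fin m → ℝ) :
    ∃ y : Fin n → ℤ, ∀ i, |(Θ *ᵥ v - ivec y) i| ≤ 1 / 2 :=
  ⟨fun i => round ((Θ *ᵥ v) i), fun i => by simpa [ivec] using abs_sub_round ((Θ *ᵥ v) i)⟩

variable [NeZero m]

theorem unifMultApprox_zero : UnifMultApprox n m Θ 0 := by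
  filter_upwards [eventually_ge_atTop 1] with t ht
  obtain ⟨y, hy⟩ := exists_abs_mulVec_sub_le_half Θ (ivec fun _ => 1)
  refine ⟨fun _ => 1, y, fun h => one_ne_zero (congrFun h 0), by simpa [Pigeo', ivec] using ht, ?_⟩
  rw [neg_zero, Real.rpow_zero]
  refine Real.rpow_le_one (prod_nonneg fun i _ => abs_nonneg _)
    (prod_le_one (fun i _ => abs_nonneg _) fun i _ => ?_) (by positivity)
  linarith [hy i]

theorem malpha_nonneg : 0 ≤ malpha n m Θ :=
  le_sSup ⟨0, rfl, unifMultApprox_zero⟩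

theorem unifOrdApprox_of_nonpos {β : ℝ} (hβ : β ≤ 0) : UnifOrdApprox n m Θ β := by
  filter_upwards [eventually_ge_atTop 1] with t ht
  have h1 : 1 ≤ t ^ (-β) := Real.one_le_rpow ht (neg_nonneg.mpr hβ)
  obtain ⟨y, hy⟩ := exists_abs_mulVec_sub_le_half Θ (ivec fun _ => 1)
  refine ⟨fun _ => 1, y, fun h => one_ne_zero (congrFun h 0),
    (pi_norm_le_iff_of_nonneg (by linarith)).mpr fun _ => by simpa [ivec] using ht,
    (pi_norm_le_iff_of_nonneg (by linarith)).mpr fun i => ?_⟩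
  rw [Real.norm_eq_abs]
  linarith [hy i]

theorem le_oalpha_of_forall_pos {r : EReal}
    (h : ∀ β : ℝ, 0 < β → (β : EReal) < r → UnifOrdApprox n m Θ β) : r ≤ oalpha n m Θ :=
  EReal.ge_of_forall_gt_iff_ge.mp fun β hβ => le_sSup
    ⟨β, rfl, (le_or_gt β 0).elim unifOrdApprox_of_nonpos fun hβ0 => h β hβ0 hβ⟩

end Exponents

theorem unifOrdApprox_transpose_of_lt_malpha {m : ℕ} {Θ : Matrix (Fin 1) (Fin m) ℝ} {β : ℝ}
    (hβ : 0 < β) (hβm : (m - 1) * β < 1)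
    (h : ((m * (1 + β) / (1 - (m - 1) * β) : ℝ) : EReal) < malpha 1 m Θ) :
    UnifOrdApprox m 1 Θᵀ β := by
  obtain ⟨γ, hγ₁, hγ₂⟩ := EReal.exists_between_coe_real h
  have hγ₁ := EReal.coe_lt_coe_iff.mp hγ₁
  have hpos : 0 < 1 - (m - 1) * β := by linarith
  exact unifOrdApprox_transpose_of_unifMultApprox hβ (lt_of_le_of_lt (by positivity) hγ₁)
    ((div_lt_iff₀ hpos).mp hγ₁) (unifMultApprox_of_coe_lt_malpha hγ₂)

/-- Corollary 8: for n = 1, α(ᵗΘ) ≥ (α_×(Θ) − m)/((m−1) α_×(Θ) + m), where for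
α_×(Θ) = +∞ the right-hand side is read as 1/(m−1) if m ≥ 2, and as +∞ if m = 1. -/
theorem oalpha_transpose_ge_of_malpha (m : ℕ) (hm : 0 < m)
    (Θ : Matrix (Fin 1) (Fin m) ℝ) :
    (malpha 1 m Θ ≠ ⊤ →
      oalpha m 1 Θᵀ ≥ ((((malpha 1 m Θ).toReal - m) /
        (((m : ℝ) - 1) * (malpha 1 m Θ).toReal + m) : ℝ) : EReal)) ∧
    (malpha 1 m Θ = ⊤ → m = 1 → oalpha m 1 Θᵀ = ⊤) ∧
    (malpha 1 m Θ = ⊤ → 2 ≤ m → oalpha m 1 Θᵀ ≥ (((1 : ℝ) / ((m : ℝ) - 1) : ℝ) : EReal)) := by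
  have : NeZero m := ⟨hm.ne'⟩
  have hm₁ : (1 : ℝ) ≤ m := by exact_mod_cast hm
  have of_top (htop : malpha 1 m Θ = ⊤) {β : ℝ} (hβ : 0 < β) (hβm : (m - 1) * β < 1) :
      UnifOrdApprox m 1 Θᵀ β :=
    unifOrdApprox_transpose_of_lt_malpha hβ hβm (htop ▸ EReal.coe_lt_top _)
  refine ⟨fun htop => ?_, fun htop hm1 => ?_, fun htop hm2 => ?_⟩
  · obtain ⟨a, ha⟩ : ∃ a : ℝ, (a : EReal) = malpha 1 m Θ :=
      ⟨_, EReal.coe_toReal htop (ne_bot_of_le_ne_bot (by simp) malpha_nonneg)⟩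
    have ha₀ : 0 ≤ a := EReal.coe_nonneg.mp (ha ▸ malpha_nonneg)
    rw [← ha, EReal.toReal_coe]
    refine le_oalpha_of_forall_pos fun β hβ hβa => ?_
    have hden : 0 < (m - 1) * a + m := by nlinarith
    have key : m * (1 + β) < a * (1 - (m - 1) * β) := by
      have := (lt_div_iff₀ hden).mp (EReal.coe_lt_coe_iff.mp hβa)
      linarith
    have hβm : (m - 1) * β < 1 := by nlinarith
    refine unifOrdApprox_transpose_of_lt_malpha hβ hβm (ha ▸ EReal.coe_lt_coe_iff.mpr ?_)
    exact (div_lt_iff₀ (by linarith)).mpr key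
  · subst hm1
    exact eq_top_iff.mpr (le_oalpha_of_forall_pos fun β hβ _ => of_top htop hβ (by simp))
  · have hm2 : (0 : ℝ) < m - 1 := by linarith [show (2 : ℝ) ≤ m by exact_mod_cast hm2]
    exact le_oalpha_of_forall_pos fun β hβ hβm =>
      of_top htop hβ (by rwa [mul_comm, ← lt_div_iff₀ hm2, ← EReal.coe_lt_coe_iff])
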